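/- arXiv:1908.03486 — 4 statements merged into one kernel-verified Lean document; each statement's English description precedes it below -/
import Mathlib

section
/- Let T be a finite subset of ℝⁿ with n ≥ 2, and fix an index ℓ with 1 ≤ ℓ < n. Then there exists a vector u ∈ ℤⁿ with u_ℓ = −1 and u_i ≥ 0 for all i ≠ ℓ such that the linear map π_u : ℝⁿ → ℝ, w ↦ −∑_{i=1}^n u_i w_i, is injective on T. -/
open Polynomial in
/-- For a finite set `T ⊆ ℝⁿ` (`n ≥ 2`) and an index `ℓ` with `1 ≤ ℓ < n`
(in one-based indexing, i.e. `ℓ` is not the last index), there is `u ∈ ℤⁿ` with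
`u_ℓ = -1`, `u_i ≥ 0` for `i ≠ ℓ`, such that `π_u : w ↦ -∑ u_i w_i` is injective on `T`. -/
theorem stmt2 (n : ℕ) (hn : 2 ≤ n) (T : Set (Fin n → ℝ)) (hT : T.Finite)
    (ℓ : Fin n) (hℓ : (ℓ : ℕ) < n - 1) :
    ∃ u : Fin n → ℤ, u ℓ = -1 ∧ (∀ i, i ≠ ℓ → 0 ≤ u i) ∧
      Set.InjOn (fun w : Fin n → ℝ => -∑ i, (u i : ℝ) * w i) T := by
  classical
  set D : (Fin n → ℝ) → (Fin n → ℝ) → Polynomial ℝ := fun w w' =>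
    (∑ i ∈ Finset.univ.erase ℓ, C (w i - w' i) * X ^ ((i : ℕ) + 1))
      - C (w ℓ - w' ℓ) with hD
  have hDne : ∀ w w' : Fin n → ℝ, w ≠ w' → D w w' ≠ 0 := by
    intro w w' hne
    by_cases h : ∀ i ∈ Finset.univ.erase ℓ, w i - w' i = 0
    · have hdl : w ℓ - w' ℓ ≠ 0 := by
        intro h0
        apply hne
        funext i
        by_cases hi : i = ℓ
        · subst hi; linarith
        · have := h i (Finset.mem_erase.mpr ⟨hi, Finset.mem_univ i⟩); linarith
      intro h0
      have : (D w w').coeff 0 = 0 := by rw [h0]; simp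
      rw [hD] at this
      simp only [Polynomial.coeff_sub, Polynomial.finset_sum_coeff,
        Polynomial.coeff_C_mul, Polynomial.coeff_X_pow, Polynomial.coeff_C] at this
      have hs : ∀ i ∈ Finset.univ.erase ℓ,
          (w i - w' i) * (if (0:ℕ) = (i:ℕ) + 1 then (1:ℝ) else 0) = 0 := by
        intro i hi
        simp [h i hi]
      rw [Finset.sum_eq_zero hs] at this
      simp at this
      exact hdl (by linarith)
    · push_neg at h
      obtain ⟨j, hj, hdj⟩ := h
      intro h0
      have : (D w w').coeff ((j : ℕ) + 1) = 0 := by rw [h0]; simp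
      rw [hD] at this
      simp only [Polynomial.coeff_sub, Polynomial.finset_sum_coeff,
        Polynomial.coeff_C_mul, Polynomial.coeff_X_pow, Polynomial.coeff_C] at this
      rw [Finset.sum_eq_single j] at this
      · simp at this
        exact hdj this
      · intro i hi hij
        have : ((j : ℕ) + 1 = (i : ℕ) + 1) = False := by
          simp only [eq_iff_iff, iff_false]
          intro hc
          exact hij (Fin.ext (Nat.succ_injective hc)).symm
        simp [this]
        exact fun hc => absurd (Fin.ext hc).symm hij
      · intro hj'; exact absurd hj hj'
  -- the set of bad real numbers
  let P : Set ((Fin n → ℝ) × (Fin n → ℝ)) := {p | p.1 ∈ T ∧ p.2 ∈ T ∧ p.1 ≠ p.2}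
  have hPfin : P.Finite := (hT.prod hT).subset (fun p hp => ⟨hp.1, hp.2.1⟩)
  let B : Set ℝ := ⋃ p ∈ P, {x | (D p.1 p.2).IsRoot x}
  have hBfin : B.Finite := by
    apply Set.Finite.biUnion hPfin
    intro p hp
    exact Polynomial.finite_setOf_isRoot (hDne p.1 p.2 hp.2.2)
  have hNatfin : {m : ℕ | ((m : ℝ) ∈ B)}.Finite :=
    hBfin.preimage (Nat.cast_injective.injOn)
  obtain ⟨N, hN⟩ := hNatfin.infinite_compl.nonempty
  simp only [Set.mem_compl_iff, Set.mem_setOf_eq] at hN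
  set u : Fin n → ℤ := fun i => if i = ℓ then -1 else (N : ℤ) ^ ((i : ℕ) + 1) with hu
  refine ⟨u, by simp [hu], ?_, ?_⟩
  · intro i hi
    simp only [hu, if_neg hi]
    positivity
  · intro w hw w' hw' h
    by_contra hne
    apply hN
    refine Set.mem_biUnion (show (w, w') ∈ P from ⟨hw, hw', hne⟩) ?_
    simp only [Set.mem_setOf_eq, Polynomial.IsRoot, hD]
    have hsum : ∑ i, (u i : ℝ) * (w i - w' i) = 0 := by
      have h' : ∑ i, (u i : ℝ) * w i = ∑ i, (u i : ℝ) * w' i := by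
        have := h
        simp only [neg_inj] at this
        exact this
      simp only [mul_sub]
      rw [Finset.sum_sub_distrib, h', sub_self]
    rw [← Finset.add_sum_erase _ _ (Finset.mem_univ ℓ)] at hsum
    have huℓ : (u ℓ : ℝ) = -1 := by simp [hu]
    rw [huℓ] at hsum
    have hrest : ∀ i ∈ Finset.univ.erase ℓ,
        (u i : ℝ) * (w i - w' i) = (w i - w' i) * (N : ℝ) ^ ((i : ℕ) + 1) := by
      intro i hi
      simp only [hu, if_neg (Finset.mem_erase.mp hi).1]
      push_cast
      ring
    rw [Finset.sum_congr rfl hrest] at hsum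
    simp only [Polynomial.eval_sub, Polynomial.eval_finset_sum, Polynomial.eval_mul,
      Polynomial.eval_C, Polynomial.eval_pow, Polynomial.eval_X]
    push_cast at hsum ⊢
    linarith
end

section
/- Let K be a field, f_n ∈ K[x_n] a nonzero polynomial, and f₁,…,f_{n−1} ∈ K[x_n]. Suppose the polynomial ideal J = (f_n, x_{n−1} − f_{n−1}, …, x₁ − f₁) ⊆ K[x₁,…,x_n] is saturated with respect to x₁⋯x_n (i.e., J : (x₁⋯x_n)^∞ = J) and f_n is not a unit. Then f_n is coprime to x_n and coprime to each f_i for i < n in K[x_n]. -/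
open MvPolynomial

/-- Let `J = (f_n, x_{n-1} - f_{n-1}, …, x₁ - f₁) ⊆ K[x₁,…,x_n]` (here `n ↦ n+1`
variables, indexed by `Fin (n+1)` with `x_n` the last variable, univariate polynomials
embedded via `x_n`).  If `J` is saturated with respect to `x₁⋯x_n` and `f_n` is nonzero
and not a unit, then `f_n` is coprime to `x_n` and to each `f_i` in `K[x_n]`. -/
theorem stmt10 (K : Type*) [Field K] (n : ℕ)
    (fn : Polynomial K) (f : Fin n → Polynomial K)
    (hfn : fn ≠ 0) (hfu : ¬ IsUnit fn)
    (J : Ideal (MvPolynomial (Fin (n + 1)) K))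
    (hJ : J = Ideal.span
      ({Polynomial.aeval (X (Fin.last n) : MvPolynomial (Fin (n + 1)) K) fn} ∪
        Set.range fun i : Fin n =>
          X i.castSucc - Polynomial.aeval (X (Fin.last n) : MvPolynomial (Fin (n + 1)) K) (f i)))
    (hsat : ∀ p : MvPolynomial (Fin (n + 1)) K, (∏ i, X i) * p ∈ J → p ∈ J) :
    IsCoprime fn Polynomial.X ∧ ∀ i : Fin n, IsCoprime fn (f i) := by
  classical
  set A : Polynomial K →ₐ[K] MvPolynomial (Fin (n + 1)) K :=
    Polynomial.aeval (X (Fin.last n)) with hA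
  set v : Fin (n + 1) → Polynomial K := Fin.lastCases Polynomial.X f with hv
  set φ : MvPolynomial (Fin (n + 1)) K →ₐ[K] Polynomial K := aeval v with hφ
  have hvlast : v (Fin.last n) = Polynomial.X := Fin.lastCases_last
  have hvcast : ∀ i : Fin n, v i.castSucc = f i := fun i => Fin.lastCases_castSucc i
  have hφA : ∀ q : Polynomial K, φ (A q) = q := by
    intro q
    rw [hA, hφ, ← Polynomial.aeval_algHom_apply]
    simp [aeval_X, hvlast]
  have hAfnJ : A fn ∈ J := by
    rw [hJ]; exact Ideal.subset_span (Or.inl rfl)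
  have hgenJ : ∀ i : Fin n, X i.castSucc - A (f i) ∈ J := by
    intro i; rw [hJ]; exact Ideal.subset_span (Or.inr ⟨i, rfl⟩)
  -- p - A (φ p) ∈ J
  have hsub : ∀ p : MvPolynomial (Fin (n + 1)) K, p - A (φ p) ∈ J := by
    intro p
    induction p using MvPolynomial.induction_on with
    | C a =>
        have : (C a : MvPolynomial (Fin (n + 1)) K) - A (Polynomial.C a) = 0 := by
          simp [hA, Polynomial.aeval_C, algebraMap_eq]
        have h2 : φ (C a) = Polynomial.C a := by
          simp [hφ, aeval_C, Polynomial.algebraMap_eq]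
        rw [h2, this]; exact J.zero_mem
    | add p q hp hq =>
        have := J.add_mem hp hq
        convert this using 1
        simp only [map_add]
        ring
    | mul_X p j hp =>
        have hXj : X j - A (φ (X j)) ∈ J := by
          rcases Fin.eq_castSucc_or_eq_last j with ⟨i, rfl⟩ | rfl
          · rw [hφ, aeval_X, hvcast]; exact hgenJ i
          · rw [hφ, aeval_X, hvlast]
            simp [hA]
        have key : p * X j - A (φ (p * X j))
            = (p - A (φ p)) * X j + A (φ p) * (X j - A (φ (X j))) := by
          rw [map_mul, map_mul]; ring
        rw [key]
        exact J.add_mem (J.mul_mem_right _ hp) (J.mul_mem_left _ hXj)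
  -- membership characterization
  have hmem : ∀ p : MvPolynomial (Fin (n + 1)) K, p ∈ J ↔ fn ∣ φ p := by
    intro p
    constructor
    · intro hp
      have : φ p ∈ Ideal.span {fn} := by
        have hle : J ≤ Ideal.comap φ.toRingHom (Ideal.span {fn}) := by
          rw [hJ, Ideal.span_le]
          rintro q (rfl | ⟨i, rfl⟩)
          · show φ.toRingHom _ ∈ Ideal.span {fn}
            simp only [AlgHom.toRingHom_eq_coe, RingHom.coe_coe]
            rw [hφA]
            exact Ideal.subset_span rfl
          · show φ.toRingHom _ ∈ Ideal.span {fn}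
            simp only [AlgHom.toRingHom_eq_coe, RingHom.coe_coe, map_sub]
            rw [hφA, hφ, aeval_X, hvcast, sub_self]
            exact (Ideal.span {fn}).zero_mem
        exact hle hp
      rwa [Ideal.mem_span_singleton] at this
    · rintro ⟨q, hq⟩
      have : p = (p - A (φ p)) + A fn * A q := by
        rw [← map_mul, ← hq]; ring
      rw [this]
      exact J.add_mem (hsub p) (J.mul_mem_right _ hAfnJ)
  -- key divisibility property
  have hreg : ∀ h : Polynomial K,
      fn ∣ (Polynomial.X * ∏ i, f i) * h → fn ∣ h := by
    intro h hd
    have hφprod : φ (∏ i : Fin (n + 1), X i) = Polynomial.X * ∏ i, f i := by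
      rw [map_prod]
      simp only [hφ, aeval_X]
      rw [Fin.prod_univ_castSucc]
      simp [hvlast, hvcast, mul_comm]
    have h1 : (∏ i : Fin (n + 1), X i) * A h ∈ J := by
      rw [hmem, map_mul, hφprod, hφA]
      exact hd
    have h2 := hsat _ h1
    rw [hmem, hφA] at h2
    exact h2
  -- coprimality from hreg
  have hcop : IsCoprime fn (Polynomial.X * ∏ i, f i) := by
    rw [← EuclideanDomain.gcd_isUnit_iff]
    set g := Polynomial.X * ∏ i, f i with hg
    set d := EuclideanDomain.gcd fn g with hd
    obtain ⟨c, hc⟩ := EuclideanDomain.gcd_dvd_left fn g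
    obtain ⟨e, he⟩ := EuclideanDomain.gcd_dvd_right fn g
    have hdvd : fn ∣ g * c := ⟨e, by
      conv_lhs => rw [he]
      conv_rhs => rw [hc]
      ring⟩
    obtain ⟨q, hq⟩ := hreg c hdvd
    have hdq : d * q = 1 := by
      have h1 : fn * 1 = fn * (d * q) := by
        rw [mul_one]
        conv_lhs => rw [hc, hq]
        ring
      exact (mul_left_cancel₀ hfn h1).symm
    exact IsUnit.of_mul_eq_one (a := d) q hdq
  refine ⟨hcop.of_mul_right_left, fun i => ?_⟩
  exact (hcop.of_mul_right_right).of_isCoprime_of_dvd_right (Finset.dvd_prod_of_mem f (Finset.mem_univ i))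
end

section
/- Let K be a field, f_n ∈ K[x_n] with f_n coprime to x_n and to each f_i (i ≠ ℓ, n), and let u ∈ ℤⁿ with u_ℓ = −1, u_i ≥ 0 for i ≠ ℓ, ℓ < n. Define f_ℓ' ∈ K[x_n] as the unique polynomial of degree < deg f_n with f_ℓ' ≡ (x_n^{u_n} · ∏_{i≠ℓ,n} f_i^{u_i})^{−1} · f_ℓ (mod f_n). Then the ideal generated by {f_n, x_{n−1}−f_{n−1}, …, (∏_{i≠ℓ} x_i^{u_i})·x_ℓ − f_ℓ, …, x₁−f₁} in K[x₁,…,x_n] modulo (f_n, x_i − f_i for i ≠ ℓ, n) coincides with the ideal generated by {f_n, x_{n−1}−f_{n−1}, …, x_ℓ − f_ℓ', …, x₁−f₁}. -/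
/-!
Modulo the ideal `J` spanned by `f_n` and the `x_i - f_i` (`i ≠ ℓ`), the monomial
`∏_{i≠ℓ} x_i^{u_i}` becomes `g = x_n^{u_n} ∏_{i≠ℓ,n} f_i^{u_i}`, so the generator
`(∏_{i≠ℓ} x_i^{u_i}) x_ℓ - f_ℓ` is congruent to `g · (x_ℓ - f_ℓ')` by the choice of `f_ℓ'`.
Since `f_n` is coprime to `g`, the class of `g` is a unit modulo `J`, so the two generators
span the same ideal together with `J`.
-/

open MvPolynomial

theorem Ideal.span_union_singleton_eq_of_mk_eq_unit_mul {R : Type*} [CommRing R] (S : Set R)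
    {a b c : R} (hc : IsUnit (Ideal.Quotient.mk (Ideal.span S) c))
    (habc : Ideal.Quotient.mk (Ideal.span S) a = Ideal.Quotient.mk (Ideal.span S) (c * b)) :
    Ideal.span (S ∪ {a}) = Ideal.span (S ∪ {b}) := by
  have sup_eq_comap (x : R) : Ideal.span (S ∪ {x}) =
      (Ideal.span {Ideal.Quotient.mk (Ideal.span S) x}).comap (Ideal.Quotient.mk _) := by
    rw [← Set.image_singleton, ← Ideal.map_span, Ideal.comap_map_of_surjective _
      Ideal.Quotient.mk_surjective, ← RingHom.ker_eq_comap_bot, Ideal.mk_ker, Ideal.span_union,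
      sup_comm]
  rw [sup_eq_comap, sup_eq_comap, habc, map_mul, Ideal.span_singleton_mul_left_unit hc]

theorem IsCoprime.isUnit_mk_map {R S : Type*} [CommRing R] [CommRing S] (φ : R →+* S)
    {J : Ideal S} {p q : R} (h : IsCoprime p q) (hp : φ p ∈ J) :
    IsUnit (Ideal.Quotient.mk J (φ q)) := by
  have := h.map ((Ideal.Quotient.mk J).comp φ)
  rwa [RingHom.comp_apply, Ideal.Quotient.eq_zero_iff_mem.mpr hp, isCoprime_zero_left] at this

theorem Fin.prod_univ_erase_castSucc {M : Type*} [CommMonoid M] {n : ℕ} (ℓ : Fin n)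
    (g : Fin (n + 1) → M) :
    ∏ i ∈ Finset.univ.erase ℓ.castSucc, g i
      = g (Fin.last n) * ∏ j ∈ Finset.univ.erase ℓ, g j.castSucc := by
  have hset : Finset.univ.erase ℓ.castSucc
      = insert (Fin.last n) ((Finset.univ.erase ℓ).image Fin.castSucc) := by
    ext i
    rcases Fin.eq_castSucc_or_eq_last i with ⟨j, rfl⟩ | rfl
    · simp [Fin.castSucc_inj, (Fin.castSucc_lt_last j).ne]
    · simp [(Fin.castSucc_lt_last ℓ).ne']
  rw [hset, Finset.prod_insert (by simp [Fin.castSucc_ne_last]),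
    Finset.prod_image (fun a _ b _ h => Fin.castSucc_injective _ h)]

theorem MvPolynomial.mk_prod_X_pow_erase_castSucc {R : Type*} [CommRing R] {n : ℕ} (ℓ : Fin n)
    (f : Fin n → Polynomial R) (u : Fin (n + 1) → ℕ) {J : Ideal (MvPolynomial (Fin (n + 1)) R)}
    (hJ : ∀ i, i ≠ ℓ → X i.castSucc - Polynomial.aeval (X (Fin.last n)) (f i) ∈ J) :
    Ideal.Quotient.mk J (∏ i ∈ Finset.univ.erase ℓ.castSucc, X i ^ u i) =
      Ideal.Quotient.mk J (Polynomial.aeval (X (Fin.last n))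
        (Polynomial.X ^ u (Fin.last n) * ∏ i ∈ Finset.univ.erase ℓ, f i ^ u i.castSucc)) := by
  rw [Fin.prod_univ_erase_castSucc]
  simp only [map_mul, map_pow, map_prod, Polynomial.aeval_X]
  congr 1
  refine Finset.prod_congr rfl fun i hi => ?_
  rw [Ideal.Quotient.eq.mpr (hJ i (Finset.ne_of_mem_erase hi))]

theorem stmt11_general (K : Type*) [Field K] (n : ℕ)
    (fn : Polynomial K) (f : Fin n → Polynomial K) (ℓ : Fin n)
    (hx : IsCoprime fn Polynomial.X)
    (hf : ∀ i : Fin n, i ≠ ℓ → IsCoprime fn (f i))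
    (u : Fin (n + 1) → ℕ)
    (fℓ' : Polynomial K)
    (hcong : fn ∣
      (Polynomial.X ^ u (Fin.last n) *
          ∏ i ∈ Finset.univ.erase ℓ, f i ^ u i.castSucc) * fℓ' - f ℓ) :
    Ideal.span
        (({Polynomial.aeval (X (Fin.last n) : MvPolynomial (Fin (n + 1)) K) fn} :
            Set (MvPolynomial (Fin (n + 1)) K)) ∪
          (Set.range fun i : {i : Fin n // i ≠ ℓ} =>
            X (i.val.castSucc) -
              Polynomial.aeval (X (Fin.last n) : MvPolynomial (Fin (n + 1)) K) (f i.val)) ∪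
          {(∏ i ∈ Finset.univ.erase ℓ.castSucc, (X i : MvPolynomial (Fin (n + 1)) K) ^ u i) *
              X ℓ.castSucc -
            Polynomial.aeval (X (Fin.last n) : MvPolynomial (Fin (n + 1)) K) (f ℓ)})
      = Ideal.span
        (({Polynomial.aeval (X (Fin.last n) : MvPolynomial (Fin (n + 1)) K) fn} :
            Set (MvPolynomial (Fin (n + 1)) K)) ∪
          (Set.range fun i : {i : Fin n // i ≠ ℓ} =>
            X (i.val.castSucc) -
              Polynomial.aeval (X (Fin.last n) : MvPolynomial (Fin (n + 1)) K) (f i.val)) ∪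
          {X ℓ.castSucc -
            Polynomial.aeval (X (Fin.last n) : MvPolynomial (Fin (n + 1)) K) fℓ'}) := by
  set A := Polynomial.aeval (R := K) (X (Fin.last n) : MvPolynomial (Fin (n + 1)) K)
  set S : Set (MvPolynomial (Fin (n + 1)) K) := {A fn} ∪
    Set.range fun i : {i : Fin n // i ≠ ℓ} => X (i.val.castSucc) - A (f i.val)
  set g := Polynomial.X ^ u (Fin.last n) * ∏ i ∈ Finset.univ.erase ℓ, f i ^ u i.castSucc
  have hfnS : A fn ∈ Ideal.span S := Ideal.subset_span (.inl rfl)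
  have hcop : IsCoprime fn g :=
    hx.pow_right.mul_right <| IsCoprime.prod_right fun i hi =>
      (hf i (Finset.ne_of_mem_erase hi)).pow_right
  have hprod := mk_prod_X_pow_erase_castSucc ℓ f u (J := Ideal.span S) fun i hi =>
    Ideal.subset_span (.inr ⟨⟨i, hi⟩, rfl⟩)
  have hfℓ : Ideal.Quotient.mk (Ideal.span S) (A g * A fℓ') =
      Ideal.Quotient.mk (Ideal.span S) (A (f ℓ)) := by
    rw [Ideal.Quotient.eq, ← map_mul, ← map_sub]
    exact Ideal.mem_of_dvd _ (map_dvd A hcong) hfnS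
  refine Ideal.span_union_singleton_eq_of_mk_eq_unit_mul S
    (hcop.isUnit_mk_map A.toRingHom hfnS) ?_
  rw [map_sub, map_mul, hprod, ← hfℓ, ← map_mul, ← map_sub, AlgHom.toRingHom_eq_coe,
    RingHom.coe_coe, mul_sub]

/-- Correctness of the slim unimodular Gröbner basis transformation: if `f_n` is coprime
to `x_n` and to each `f_i` (`i ≠ ℓ`), `u_ℓ = -1`, `u_i ≥ 0` otherwise, and
`f_ℓ' ∈ K[x_n]` is the polynomial of degree `< deg f_n` with
`(x_n^{u_n} ∏_{i≠ℓ,n} f_i^{u_i}) · f_ℓ' ≡ f_ℓ (mod f_n)`, then the ideal of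
`K[x₁,…,x_n]` generated by
`{f_n, x_i - f_i (i ≠ ℓ), (∏_{i≠ℓ} x_i^{u_i})·x_ℓ - f_ℓ}` coincides with the ideal
generated by `{f_n, x_i - f_i (i ≠ ℓ), x_ℓ - f_ℓ'}`.
Here there are `n+1` variables indexed by `Fin (n+1)`, `x_n` being the last one, `ℓ` one
of the first `n` indices, and the nonnegative exponents `u_i` (`i ≠ ℓ`) are given as
naturals. -/
theorem stmt11 (K : Type*) [Field K] (n : ℕ)
    (fn : Polynomial K) (f : Fin n → Polynomial K) (ℓ : Fin n)
    (hfn : fn ≠ 0)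
    (hx : IsCoprime fn Polynomial.X)
    (hf : ∀ i : Fin n, i ≠ ℓ → IsCoprime fn (f i))
    (u : Fin (n + 1) → ℕ)
    (fℓ' : Polynomial K) (hdeg : fℓ'.degree < fn.degree)
    (hcong : fn ∣
      (Polynomial.X ^ u (Fin.last n) *
          ∏ i ∈ Finset.univ.erase ℓ, f i ^ u i.castSucc) * fℓ' - f ℓ) :
    Ideal.span
        (({Polynomial.aeval (X (Fin.last n) : MvPolynomial (Fin (n + 1)) K) fn} :
            Set (MvPolynomial (Fin (n + 1)) K)) ∪
          (Set.range fun i : {i : Fin n // i ≠ ℓ} =>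
            X (i.val.castSucc) -
              Polynomial.aeval (X (Fin.last n) : MvPolynomial (Fin (n + 1)) K) (f i.val)) ∪
          {(∏ i ∈ Finset.univ.erase ℓ.castSucc, (X i : MvPolynomial (Fin (n + 1)) K) ^ u i) *
              X ℓ.castSucc -
            Polynomial.aeval (X (Fin.last n) : MvPolynomial (Fin (n + 1)) K) (f ℓ)})
      = Ideal.span
        (({Polynomial.aeval (X (Fin.last n) : MvPolynomial (Fin (n + 1)) K) fn} :
            Set (MvPolynomial (Fin (n + 1)) K)) ∪
          (Set.range fun i : {i : Fin n // i ≠ ℓ} =>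
            X (i.val.castSucc) -
              Polynomial.aeval (X (Fin.last n) : MvPolynomial (Fin (n + 1)) K) (f i.val)) ∪
          {X ℓ.castSucc -
            Polynomial.aeval (X (Fin.last n) : MvPolynomial (Fin (n + 1)) K) fℓ'}) :=
  stmt11_general K n fn f ℓ hx hf u fℓ' hcong
end

section
/- Let K be a field with valuation ν extended to its algebraic closure, and let f ∈ K[x] be a nonzero polynomial with f(0) ≠ 0. Then the set of valuations {ν(p) : p a root of f in the algebraic closure} equals the set of negatives of the slopes of the lower Newton polygon of f. -/
set_option linter.unusedSectionVars false
set_option maxHeartbeats 1000000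

open Polynomial

section Helpers

variable {L : Type*} [Field L] (w : L → ℝ)
  (hmul : ∀ x y : L, x ≠ 0 → y ≠ 0 → w (x * y) = w x + w y)
  (hadd : ∀ x y : L, x ≠ 0 → y ≠ 0 → x + y ≠ 0 → min (w x) (w y) ≤ w (x + y))

include hmul in
lemma newton_w_one : w 1 = 0 := by
  have := hmul 1 1 one_ne_zero one_ne_zero
  simp at this; linarith

include hmul in
lemma newton_w_neg {x : L} (hx : x ≠ 0) : w (-x) = w x := by
  have h1 : w ((-1 : L) * (-1)) = w (-1) + w (-1) := hmul _ _ (by norm_num) (by norm_num)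
  simp at h1
  have hw1 := newton_w_one w hmul
  have hneg1 : w (-1 : L) = 0 := by linarith
  have := hmul (-1) x (by norm_num) hx
  rw [neg_one_mul] at this
  rw [this, hneg1]; ring

include hmul in
lemma newton_w_pow {p : L} (hp : p ≠ 0) (i : ℕ) : w (p ^ i) = i * w p := by
  induction i with
  | zero => simpa using newton_w_one w hmul
  | succ n ih =>
    rw [pow_succ, hmul _ _ (pow_ne_zero _ hp) hp, ih]
    push_cast; ring

include hadd in
lemma newton_w_add_le {x y : L} {b : ℝ} (hx : x = 0 ∨ b ≤ w x) (hy : y = 0 ∨ b ≤ w y)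
    (hxy : x + y ≠ 0) : b ≤ w (x + y) := by
  by_cases h0 : x = 0
  · subst h0
    rcases hy with rfl | hy
    · simp at hxy
    · simpa using hy
  by_cases h1 : y = 0
  · subst h1
    rcases hx with h | hx
    · exact absurd h h0
    · simpa using hx
  replace hx := hx.resolve_left h0
  replace hy := hy.resolve_left h1
  have hmin := hadd x y h0 h1 hxy
  rcases le_or_gt (w x) (w y) with h | h
  · rw [min_eq_left h] at hmin; linarith
  · rw [min_eq_right h.le] at hmin; linarith

include hadd in
lemma newton_w_add_lt {x y : L} {b : ℝ} (hx : x = 0 ∨ b < w x) (hy : y = 0 ∨ b < w y)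
    (hxy : x + y ≠ 0) : b < w (x + y) := by
  by_cases h0 : x = 0
  · subst h0
    rcases hy with rfl | hy
    · simp at hxy
    · simpa using hy
  by_cases h1 : y = 0
  · subst h1
    rcases hx with h | hx
    · exact absurd h h0
    · simpa using hx
  replace hx := hx.resolve_left h0
  replace hy := hy.resolve_left h1
  have hmin := hadd x y h0 h1 hxy
  rcases le_or_gt (w x) (w y) with h | h
  · rw [min_eq_left h] at hmin; linarith
  · rw [min_eq_right h.le] at hmin; linarith

include hmul hadd in
lemma newton_w_add_eq {z x : L} (hz : z ≠ 0) (hx : x = 0 ∨ w z < w x) :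
    z + x ≠ 0 ∧ w (z + x) = w z := by
  by_cases h0 : x = 0
  · subst h0; simpa using hz
  replace hx := hx.resolve_left h0
  have hne : z + x ≠ 0 := by
    intro h
    have hxz : x = -z := by linear_combination h
    rw [hxz, newton_w_neg w hmul hz] at hx
    linarith
  refine ⟨hne, le_antisymm ?_ ?_⟩
  · have hnx : (-x : L) ≠ 0 := neg_ne_zero.mpr h0
    have hz' : (z + x) + (-x) = z := by ring
    have hmin := hadd (z + x) (-x) hne hnx (by rw [hz']; exact hz)
    rw [hz', newton_w_neg w hmul h0] at hmin
    rcases le_or_gt (w (z + x)) (w x) with h | h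
    · rwa [min_eq_left h] at hmin
    · rw [min_eq_right h.le] at hmin; linarith
  · have hmin := hadd z x hz h0 hne
    rw [min_eq_left hx.le] at hmin; exact hmin

include hmul hadd in
lemma newton_w_sum_lt (b : ℝ) (s : Multiset L) (h : ∀ x ∈ s, x = 0 ∨ b < w x)
    (hs : s.sum ≠ 0) : b < w s.sum := by
  induction s using Multiset.induction_on with
  | empty => simp at hs
  | cons a s ih =>
    rw [Multiset.sum_cons] at hs ⊢
    refine newton_w_add_lt w hadd (h a (Multiset.mem_cons_self a s)) ?_ hs
    by_cases h0 : s.sum = 0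
    · exact Or.inl h0
    · exact Or.inr (ih (fun x hx => h x (Multiset.mem_cons_of_mem hx)) h0)

include hmul hadd in
lemma newton_w_sum_eq {z : L} (hz : z ≠ 0) (s : Multiset L)
    (h : ∀ x ∈ s, x = 0 ∨ w z < w x) :
    z + s.sum ≠ 0 ∧ w (z + s.sum) = w z := by
  by_cases h0 : s.sum = 0
  · rw [h0]; simpa using hz
  have := newton_w_sum_lt w hmul hadd (w z) s h h0
  exact newton_w_add_eq w hmul hadd hz (Or.inr this)

include hmul hadd in
/-- coefficients of ∏ (X - C r) over roots of valuation < t -/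
lemma newton_w_coeff_prod_lt (t : ℝ) (s : Multiset L) (hs : ∀ r ∈ s, r ≠ 0 ∧ w r < t) :
    ((s.map fun r => X - C r).prod.coeff 0 ≠ 0 ∧
      w ((s.map fun r => X - C r).prod.coeff 0) = (s.map w).sum) ∧
    ∀ a : ℕ, 1 ≤ a → ((s.map fun r => X - C r).prod.coeff a = 0 ∨
      (s.map w).sum - t * a < w ((s.map fun r => X - C r).prod.coeff a)) := by
  induction s using Multiset.induction_on with
  | empty =>
    simp only [Multiset.map_zero, Multiset.prod_zero, Multiset.sum_zero]
    refine ⟨⟨by simp, by simpa using newton_w_one w hmul⟩, ?_⟩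
    intro a ha
    left
    rw [coeff_one, if_neg (by omega)]
  | cons r s ih =>
    obtain ⟨hr0, hrt⟩ := hs r (Multiset.mem_cons_self r s)
    have hs' : ∀ x ∈ s, x ≠ 0 ∧ w x < t := fun x hx => hs x (Multiset.mem_cons_of_mem hx)
    obtain ⟨⟨h00, h0w⟩, hia⟩ := ih hs'
    set P' : L[X] := (s.map fun r => X - C r).prod with hP'
    have hprod : ((r ::ₘ s).map fun r => X - C r).prod = P' * (X - C r) := by
      rw [Multiset.map_cons, Multiset.prod_cons, mul_comm]
    have hsum : ((r ::ₘ s).map w).sum = w r + (s.map w).sum := by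
      rw [Multiset.map_cons, Multiset.sum_cons]
    rw [hprod, hsum]
    constructor
    · rw [mul_coeff_zero]
      have hXC : (X - C r).coeff 0 = -r := by simp
      rw [hXC]
      have hne : P'.coeff 0 * (-r) ≠ 0 := mul_ne_zero h00 (neg_ne_zero.mpr hr0)
      refine ⟨hne, ?_⟩
      rw [hmul _ _ h00 (neg_ne_zero.mpr hr0), newton_w_neg w hmul hr0, h0w]
      ring
    · intro a ha
      obtain ⟨b, rfl⟩ : ∃ b, a = b + 1 := ⟨a - 1, by omega⟩
      rw [coeff_mul_X_sub_C]
      by_cases hz : P'.coeff b - P'.coeff (b + 1) * r = 0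
      · exact Or.inl hz
      right
      have hrw : P'.coeff b - P'.coeff (b + 1) * r
          = P'.coeff b + (-(P'.coeff (b + 1) * r)) := by ring
      rw [hrw] at hz ⊢
      have main : w r + (s.map w).sum - t * ((b : ℝ) + 1)
          < w (P'.coeff b + (-(P'.coeff (b + 1) * r))) := by
        refine newton_w_add_lt w hadd ?_ ?_ hz
        · rcases Nat.eq_zero_or_pos b with rfl | hb
          · right
            rw [h0w]
            push_cast
            linarith
          · rcases hia b hb with h | h
            · exact Or.inl h
            · right
              push_cast at h ⊢
              linarith
        · by_cases hc : P'.coeff (b + 1) = 0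
          · left; rw [hc]; ring
          · right
            rw [newton_w_neg w hmul (mul_ne_zero hc hr0), hmul _ _ hc hr0]
            rcases hia (b + 1) (by omega) with h | h
            · exact absurd h hc
            · push_cast at h ⊢; linarith
      push_cast at main ⊢
      linarith

include hmul hadd in
/-- coefficients of ∏ (X - C r) over roots of valuation > t -/
lemma newton_w_coeff_prod_gt (t : ℝ) (s : Multiset L) (hs : ∀ r ∈ s, r ≠ 0 ∧ t < w r) (b : ℕ) :
    (s.map fun r => X - C r).prod.coeff b = 0 ∨
      (t * ((Multiset.card s : ℝ) - b) ≤ w ((s.map fun r => X - C r).prod.coeff b) ∧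
       (b < Multiset.card s →
         t * ((Multiset.card s : ℝ) - b) < w ((s.map fun r => X - C r).prod.coeff b))) := by
  induction s using Multiset.induction_on generalizing b with
  | empty =>
    simp only [Multiset.map_zero, Multiset.prod_zero, Multiset.card_zero]
    rcases Nat.eq_zero_or_pos b with rfl | hb
    · right
      have h1 : (1 : L[X]).coeff 0 = 1 := by simp
      rw [h1, newton_w_one w hmul]
      constructor
      · push_cast; linarith
      · intro h; omega
    · left; rw [coeff_one, if_neg (by omega)]
  | cons r s ih =>
    obtain ⟨hr0, hrt⟩ := hs r (Multiset.mem_cons_self r s)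
    have hs' : ∀ x ∈ s, x ≠ 0 ∧ t < w x := fun x hx => hs x (Multiset.mem_cons_of_mem hx)
    set P' : L[X] := (s.map fun r => X - C r).prod with hP'
    have hprod : ((r ::ₘ s).map fun r => X - C r).prod = P' * (X - C r) := by
      rw [Multiset.map_cons, Multiset.prod_cons, mul_comm]
    have hcard : Multiset.card (r ::ₘ s) = Multiset.card s + 1 := by
      rw [Multiset.card_cons]
    rw [hprod, hcard]
    set d : ℕ := Multiset.card s with hd
    rcases Nat.eq_zero_or_pos b with rfl | hb
    · rw [mul_coeff_zero]
      have hXC : (X - C r).coeff 0 = -r := by simp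
      rw [hXC]
      by_cases h0 : P'.coeff 0 = 0
      · left; rw [h0]; ring
      right
      have hw0 : t * (d : ℝ) ≤ w (P'.coeff 0) := by
        rcases ih hs' 0 with h | ⟨h, _⟩
        · exact absurd h h0
        · push_cast at h ⊢; linarith
      have hww : w (P'.coeff 0 * (-r)) = w (P'.coeff 0) + w r := by
        rw [hmul _ _ h0 (neg_ne_zero.mpr hr0), newton_w_neg w hmul hr0]
      rw [hww]
      constructor
      · push_cast; linarith
      · intro _; push_cast; linarith
    · obtain ⟨b, rfl⟩ : ∃ c, b = c + 1 := ⟨b - 1, by omega⟩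
      rw [coeff_mul_X_sub_C]
      by_cases hz : P'.coeff b - P'.coeff (b + 1) * r = 0
      · exact Or.inl hz
      right
      have hrw : P'.coeff b - P'.coeff (b + 1) * r
          = P'.coeff b + (-(P'.coeff (b + 1) * r)) := by ring
      rw [hrw] at hz ⊢
      have hterm2 : -(P'.coeff (b + 1) * r) = 0 ∨
          t * ((d : ℝ) - b) < w (-(P'.coeff (b + 1) * r)) := by
        by_cases hc : P'.coeff (b + 1) = 0
        · left; rw [hc]; ring
        right
        rw [newton_w_neg w hmul (mul_ne_zero hc hr0), hmul _ _ hc hr0]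
        have hle : t * ((d : ℝ) - ((b : ℝ) + 1)) ≤ w (P'.coeff (b + 1)) := by
          rcases ih hs' (b + 1) with h | ⟨h, _⟩
          · exact absurd h hc
          · push_cast at h ⊢; linarith
        linarith
      have main_le : t * ((d : ℝ) - b) ≤ w (P'.coeff b + (-(P'.coeff (b + 1) * r))) := by
        refine newton_w_add_le w hadd ?_ (hterm2.imp_right le_of_lt) hz
        rcases ih hs' b with h | ⟨h, _⟩
        · exact Or.inl h
        · exact Or.inr h
      constructor
      · push_cast; linarith
      · intro hbd
        have hbd' : b < d := by omega
        have main_lt : t * ((d : ℝ) - b) < w (P'.coeff b + (-(P'.coeff (b + 1) * r))) := by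
          refine newton_w_add_lt w hadd ?_ hterm2 hz
          rcases ih hs' b with h | ⟨_, h⟩
          · exact Or.inl h
          · exact Or.inr (h hbd')
        push_cast
        linarith

end Helpers

/-- Newton polygon theorem: let `ν` be a (additive, real-valued) valuation on `K` extended
to a valuation `w` on an algebraic closure `L` of `K`, and let `f ∈ K[x]` be nonzero with
`f(0) ≠ 0`.  Then the set of valuations of the roots of `f` in `L` equals the set of
negated slopes of the lower Newton polygon of `f`; a real number `s` is a slope of the
lower Newton polygon iff some supporting line of slope `s` lies below all points
`(i, ν(c_i))` and touches at least two of them. -/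
theorem stmt14 (K L : Type*) [Field K] [Field L] [Algebra K L]
    (hL : IsAlgClosure K L)
    (ν : K → ℝ) (w : L → ℝ)
    (hmul : ∀ x y : L, x ≠ 0 → y ≠ 0 → w (x * y) = w x + w y)
    (hadd : ∀ x y : L, x ≠ 0 → y ≠ 0 → x + y ≠ 0 → min (w x) (w y) ≤ w (x + y))
    (hext : ∀ x : K, ν x = w (algebraMap K L x))
    (f : Polynomial K) (hf : f ≠ 0) (h0 : f.coeff 0 ≠ 0) :
    {t : ℝ | ∃ p : L, p ≠ 0 ∧ Polynomial.aeval p f = 0 ∧ w p = t}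
      = {t : ℝ | ∃ c : ℝ,
          (∀ i ∈ f.support, (-t) * (i : ℝ) + c ≤ ν (f.coeff i)) ∧
          ∃ i ∈ f.support, ∃ j ∈ f.support, i < j ∧
            (-t) * (i : ℝ) + c = ν (f.coeff i) ∧ (-t) * (j : ℝ) + c = ν (f.coeff j)} := by
  have inj : Function.Injective (algebraMap K L) := (algebraMap K L).injective
  set g : Polynomial L := f.map (algebraMap K L) with hgdef
  have hg0 : g ≠ 0 := Polynomial.map_ne_zero hf
  have hgc : ∀ i, g.coeff i = algebraMap K L (f.coeff i) := fun i => Polynomial.coeff_map _ _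
  haveI : IsAlgClosed L := hL.isAlgClosed
  have hsplits : g.Splits := IsAlgClosed.splits g
  have hfact : g = Polynomial.C g.leadingCoeff
      * (g.roots.map fun a => Polynomial.X - Polynomial.C a).prod :=
    hsplits.eq_prod_roots
  have haeval : ∀ p : L, Polynomial.aeval p f = g.eval p := by
    intro p
    rw [Polynomial.aeval_def, hgdef, Polynomial.eval_map]
  ext t
  simp only [Set.mem_setOf_eq]
  constructor
  · -- valuation of a root gives a slope
    rintro ⟨p, hp0, hpf, rfl⟩
    have hsupne : f.support.Nonempty := Polynomial.support_nonempty.mpr hf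
    obtain ⟨i₀, hi₀, hmin⟩ :=
      f.support.exists_min_image (fun i => ν (f.coeff i) + w p * i) hsupne
    set T : ℕ → L := fun i => algebraMap K L (f.coeff i) * p ^ i with hT
    have hTne : ∀ i ∈ f.support, T i ≠ 0 := by
      intro i hi
      exact mul_ne_zero ((map_ne_zero_iff _ inj).mpr (Polynomial.mem_support_iff.mp hi))
        (pow_ne_zero _ hp0)
    have hTw : ∀ i ∈ f.support, w (T i) = ν (f.coeff i) + w p * i := by
      intro i hi
      rw [hT, hmul _ _ ((map_ne_zero_iff _ inj).mpr (Polynomial.mem_support_iff.mp hi))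
        (pow_ne_zero _ hp0), newton_w_pow w hmul hp0, ← hext]
      ring
    have hsum : ∑ i ∈ f.support, T i = 0 := by
      rw [← hpf, Polynomial.aeval_def, Polynomial.eval₂_eq_sum, Polynomial.sum_def]
    have hsecond : ∃ j ∈ f.support, j ≠ i₀
        ∧ ν (f.coeff j) + w p * j = ν (f.coeff i₀) + w p * i₀ := by
      by_contra hno
      push_neg at hno
      have hstrict : ∀ x ∈ (f.support.erase i₀).val.map T,
          x = 0 ∨ w (T i₀) < w x := by
        intro x hx
        obtain ⟨j, hj, rfl⟩ := Multiset.mem_map.mp hx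
        have hjmem : j ∈ f.support := Finset.mem_of_mem_erase hj
        have hjne : j ≠ i₀ := Finset.ne_of_mem_erase hj
        right
        rw [hTw j hjmem, hTw i₀ hi₀]
        exact lt_of_le_of_ne (hmin j hjmem) (fun h => hno j hjmem hjne h.symm)
      have hkey := newton_w_sum_eq w hmul hadd (hTne i₀ hi₀) _ hstrict
      apply hkey.1
      rw [← Finset.sum_eq_multiset_sum, Finset.add_sum_erase _ T hi₀]
      exact hsum
    obtain ⟨j₀, hj₀, hj₀ne, hj₀eq⟩ := hsecond
    refine ⟨ν (f.coeff i₀) + w p * i₀, ?_, ?_⟩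
    · intro k hk
      have := hmin k hk
      push_cast at this ⊢
      linarith
    · rcases lt_or_gt_of_ne hj₀ne with h | h
      · exact ⟨j₀, hj₀, i₀, hi₀, h, by push_cast; linarith, by push_cast; linarith⟩
      · exact ⟨i₀, hi₀, j₀, hj₀, h, by push_cast; linarith, by push_cast; linarith⟩
  · -- a slope gives a root with that valuation
    rintro ⟨c, hline, i, hi, j, hj, hij, hie, hje⟩
    by_contra hnr
    push_neg at hnr
    have hroots : ∀ r ∈ g.roots, r ≠ 0 ∧ w r ≠ t := by
      intro r hr
      have hre : g.eval r = 0 := (Polynomial.mem_roots'.mp hr).2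
      have hrne : r ≠ 0 := by
        rintro rfl
        rw [← Polynomial.coeff_zero_eq_eval_zero, hgc 0] at hre
        exact h0 (by simpa using (map_eq_zero_iff _ inj).mp hre)
      refine ⟨hrne, hnr r hrne ?_⟩
      rw [haeval r]; exact hre
    classical
    set S₀ := g.roots.filter (fun r => w r < t) with hS₀def
    set S₁ := g.roots.filter (fun r => ¬ w r < t) with hS₁def
    have hsplitS : S₀ + S₁ = g.roots := Multiset.filter_add_not _ _
    have hS₀ : ∀ r ∈ S₀, r ≠ 0 ∧ w r < t := by
      intro r hr
      exact ⟨(hroots r (Multiset.mem_of_mem_filter hr)).1, (Multiset.mem_filter.mp hr).2⟩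
    have hS₁ : ∀ r ∈ S₁, r ≠ 0 ∧ t < w r := by
      intro r hr
      have h1 := (Multiset.mem_filter.mp hr).2
      have h2 := hroots r (Multiset.mem_of_mem_filter hr)
      exact ⟨h2.1, lt_of_le_of_ne (not_lt.mp h1) (Ne.symm h2.2)⟩
    set P₀ := (S₀.map fun r => Polynomial.X - Polynomial.C r).prod with hP₀
    set P₁ := (S₁.map fun r => Polynomial.X - Polynomial.C r).prod with hP₁
    have hQfact : g = Polynomial.C g.leadingCoeff * (P₀ * P₁) := by
      conv_lhs => rw [hfact]
      rw [← hsplitS, Multiset.map_add, Multiset.prod_add]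
    set lead := g.leadingCoeff with hlddef
    have hlead : lead ≠ 0 := Polynomial.leadingCoeff_ne_zero.mpr hg0
    set μ := (S₀.map w).sum with hμdef
    set m₁ := Multiset.card S₁ with hm₁def
    obtain ⟨⟨hc00, hc0w⟩, hPltA⟩ := newton_w_coeff_prod_lt w hmul hadd t S₀ hS₀
    have hPgt := newton_w_coeff_prod_gt w hmul hadd t S₁ hS₁
    simp only [← hP₀, ← hμdef] at hc00 hc0w hPltA
    simp only [← hP₁, ← hm₁def] at hPgt
    have hdeg₁ : P₁.natDegree = m₁ := by
      rw [hP₁, Polynomial.natDegree_multiset_prod_X_sub_C_eq_card]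
    have hmonic₁ : P₁.Monic :=
      Polynomial.monic_multiset_prod_of_monic _ _ (fun r _ => Polynomial.monic_X_sub_C r)
    have hc1 : P₁.coeff m₁ = 1 := by rw [← hdeg₁]; exact hmonic₁.coeff_natDegree
    -- bound on generic antidiagonal terms
    have hterm : ∀ (n : ℕ) (ab : ℕ × ℕ), ab.1 + ab.2 = n → ab ≠ ((0 : ℕ), m₁) →
        P₀.coeff ab.1 * P₁.coeff ab.2 = 0 ∨
          μ + t * m₁ - t * n < w (P₀.coeff ab.1 * P₁.coeff ab.2) := by
      rintro n ⟨a, b⟩ hab hne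
      simp only at hab ⊢
      rcases Nat.eq_zero_or_pos a with rfl | ha
      · have hbn : b = n := by omega
        subst hbn
        have hbm : b ≠ m₁ := by
          intro h; exact hne (by rw [h])
        by_cases hcb : P₁.coeff b = 0
        · left; rw [hcb, mul_zero]
        right
        have hblt : b < m₁ := by
          rcases Nat.lt_or_ge b m₁ with h | h
          · exact h
          · exfalso
            exact hcb (Polynomial.coeff_eq_zero_of_natDegree_lt (by rw [hdeg₁]; omega))
        obtain ⟨_, hstrict⟩ := (hPgt b).resolve_left hcb
        have hs := hstrict hblt
        rw [hmul _ _ hc00 hcb, hc0w]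
        push_cast at hs ⊢
        linarith
      · by_cases hca : P₀.coeff a = 0
        · left; rw [hca, zero_mul]
        by_cases hcb : P₁.coeff b = 0
        · left; rw [hcb, mul_zero]
        right
        have h1 := (hPltA a ha).resolve_left hca
        have h2 : t * ((m₁ : ℝ) - b) ≤ w (P₁.coeff b) := by
          rcases Nat.lt_or_ge b (m₁ + 1) with hble | hble
          · exact ((hPgt b).resolve_left hcb).1
          · exact absurd (Polynomial.coeff_eq_zero_of_natDegree_lt (by rw [hdeg₁]; omega)) hcb
        rw [hmul _ _ hca hcb]
        have hab' : (a : ℝ) + b = n := by exact_mod_cast congrArg (Nat.cast : ℕ → ℝ) hab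
        have htn : t * (n : ℝ) = t * a + t * b := by rw [← hab']; ring
        push_cast at h1 h2 ⊢
        linarith
    -- the coefficient at m₁ is "on the line"
    have hQm : (P₀ * P₁).coeff m₁ ≠ 0 ∧ w ((P₀ * P₁).coeff m₁) = μ := by
      rw [Polynomial.coeff_mul]
      have hmem : ((0 : ℕ), m₁) ∈ Finset.HasAntidiagonal.antidiagonal m₁ := by
        simp
      rw [← Finset.add_sum_erase _ _ hmem]
      simp only [hc1, mul_one]
      rw [Finset.sum_eq_multiset_sum]
      have hkey := newton_w_sum_eq w hmul hadd hc00
        (((Finset.HasAntidiagonal.antidiagonal m₁).erase ((0 : ℕ), m₁)).val.map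
          fun ab => P₀.coeff ab.1 * P₁.coeff ab.2) ?_
      · rw [hc0w] at hkey; exact hkey
      · intro x hx
        obtain ⟨ab, habmem, rfl⟩ := Multiset.mem_map.mp hx
        have h1 := Finset.mem_erase.mp (Finset.mem_val.mp habmem)
        have hab := Finset.HasAntidiagonal.mem_antidiagonal.mp h1.2
        rcases hterm m₁ ab hab h1.1 with h | h
        · exact Or.inl h
        · right; rw [hc0w]; linarith
    -- coefficients away from m₁ are strictly above the line
    have hQne : ∀ n : ℕ, n ≠ m₁ → (P₀ * P₁).coeff n ≠ 0 →
        μ + t * m₁ - t * n < w ((P₀ * P₁).coeff n) := by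
      intro n hn hne0
      rw [Polynomial.coeff_mul] at hne0 ⊢
      rw [Finset.sum_eq_multiset_sum] at hne0 ⊢
      refine newton_w_sum_lt w hmul hadd _ _ ?_ hne0
      intro x hx
      obtain ⟨ab, habmem, rfl⟩ := Multiset.mem_map.mp hx
      have hab := Finset.HasAntidiagonal.mem_antidiagonal.mp (Finset.mem_val.mp habmem)
      refine hterm n ab hab ?_
      intro h
      rw [h] at hab
      exact hn (by simpa using hab.symm)
    have hgcoeff : ∀ n, g.coeff n = lead * (P₀ * P₁).coeff n := by
      intro n
      conv_lhs => rw [hQfact]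
      rw [Polynomial.coeff_C_mul]
    have hsupf : ∀ n : ℕ, n ∈ f.support ↔ (P₀ * P₁).coeff n ≠ 0 := by
      intro n
      rw [Polynomial.mem_support_iff]
      constructor
      · intro h hcn
        apply h
        apply inj
        rw [← hgc n, hgcoeff n, hcn, mul_zero, map_zero]
      · intro h hcn
        apply h
        have hzz : g.coeff n = 0 := by rw [hgc n, hcn, map_zero]
        rw [hgcoeff n] at hzz
        exact (mul_eq_zero.mp hzz).resolve_left hlead
    have hνw : ∀ n : ℕ, n ∈ f.support →
        ν (f.coeff n) = w lead + w ((P₀ * P₁).coeff n) := by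
      intro n hn
      rw [hext, ← hgc n, hgcoeff n, hmul _ _ hlead ((hsupf n).mp hn)]
    have hm₁mem : m₁ ∈ f.support := (hsupf m₁).mpr hQm.1
    have hφm₁ : ν (f.coeff m₁) = w lead + μ := by rw [hνw m₁ hm₁mem, hQm.2]
    have h1 : (-t) * (m₁ : ℝ) + c ≤ ν (f.coeff m₁) := hline m₁ hm₁mem
    have key : ∀ k : ℕ, k ∈ f.support → k ≠ m₁ →
        (-t) * (k : ℝ) + c = ν (f.coeff k) → False := by
      intro k hk hkne hkeq
      have hQk := hQne k hkne ((hsupf k).mp hk)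
      have hνk := hνw k hk
      linarith
    rcases ne_or_eq i m₁ with h | h
    · exact key i hi h hie
    · exact key j hj (by omega) hje
end
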